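/- For s > 0 the expected squared H^{−s} norm of the field h satisfies E(||h||_{−s}²) = π Σ_{k≥1} j_{0,k}^{−2−2s} + 2π Σ_{n,k≥1} (1 + 1/n) j_{n,k}^{−2−2s}, and this quantity is finite. -/

import Mathlib

/-!
By monotone convergence the expectation passes through the nonnegative series, so the formula
follows termwise from `E A_k² = 1` and `E |Z_{n,k} + W_n/√n|² = 1 + 1/n`. For finiteness, the
lower bounds on the Bessel zeros give `j_{0,k} ≥ (3/4)πk` and, by AM–GM, `j_{n,k}² ≥ nk`, so
the two series are dominated by `Σ k^{-2-2s}` and `Σ (nk)^{-1-s}`.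
-/

open MeasureTheory

section Expectation

variable {Ω ι : Type*} [MeasurableSpace Ω] {μ : Measure Ω} [Countable ι]

theorem lintegral_ofReal_tsum {g : ι → Ω → ℝ} (hg : ∀ i, Measurable (g i))
    (hg0 : ∀ i ω, 0 ≤ g i ω) (hint : ∀ i, Integrable (g i) μ)
    (hsum : Summable fun i => ∫ ω, g i ω ∂μ) :
    ∫⁻ ω, ENNReal.ofReal (∑' i, g i ω) ∂μ = ENNReal.ofReal (∑' i, ∫ ω, g i ω ∂μ) := by
  have hmeas : Measurable fun ω => ∑' i, ENNReal.ofReal (g i ω) :=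
    Measurable.tsum fun i => (hg i).ennreal_ofReal
  have htsum :
      ∫⁻ ω, ∑' i, ENNReal.ofReal (g i ω) ∂μ = ENNReal.ofReal (∑' i, ∫ ω, g i ω ∂μ) := by
    rw [lintegral_tsum fun i => (hg i).ennreal_ofReal.aemeasurable,
      ENNReal.ofReal_tsum_of_nonneg (fun i => integral_nonneg (hg0 i)) hsum]
    congr 1
    ext i
    exact (ofReal_integral_eq_lintegral_ofReal (hint i) (ae_of_all _ (hg0 i))).symm
  rw [← htsum]
  refine lintegral_congr_ae ?_
  filter_upwards [ae_lt_top hmeas (htsum ▸ ENNReal.ofReal_ne_top)] with ω hω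
  have hsummable : Summable fun i => g i ω :=
    (ENNReal.summable_toReal hω.ne).congr fun i => ENNReal.toReal_ofReal (hg0 i ω)
  exact ENNReal.ofReal_tsum_of_nonneg (hg0 · ω) hsummable

theorem lintegral_ofReal_tsum_mul {f : ι → Ω → ℝ} {v c : ι → ℝ}
    (hf : ∀ i, Measurable (f i)) (hf0 : ∀ i ω, 0 ≤ f i ω) (hfi : ∀ i, Integrable (f i) μ)
    (hfv : ∀ i, ∫ ω, f i ω ∂μ = v i) (hc : ∀ i, 0 ≤ c i) (hsum : Summable fun i => v i * c i) :
    ∫⁻ ω, ENNReal.ofReal (∑' i, f i ω * c i) ∂μ = ENNReal.ofReal (∑' i, v i * c i) := by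
  have hint : ∀ i, ∫ ω, f i ω * c i ∂μ = v i * c i := fun i => by
    rw [integral_mul_const, hfv]
  rw [lintegral_ofReal_tsum (fun i => (hf i).mul_const _)
    (fun i ω => mul_nonneg (hf0 i ω) (hc i)) (fun i => (hfi i).mul_const _)
    (by simpa only [hint] using hsum)]
  simp only [hint]

theorem lintegral_ofReal_mul_add_mul {X Y : Ω → ℝ} {a b : ℝ} (ha : 0 ≤ a) (hb : 0 ≤ b)
    (hX : Measurable X) (hX0 : ∀ ω, 0 ≤ X ω) (hY0 : ∀ ω, 0 ≤ Y ω) :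
    ∫⁻ ω, ENNReal.ofReal (a * X ω + b * Y ω) ∂μ =
      ENNReal.ofReal a * ∫⁻ ω, ENNReal.ofReal (X ω) ∂μ +
        ENNReal.ofReal b * ∫⁻ ω, ENNReal.ofReal (Y ω) ∂μ := by
  have hsplit : ∀ ω, ENNReal.ofReal (a * X ω + b * Y ω) =
      ENNReal.ofReal a * ENNReal.ofReal (X ω) + ENNReal.ofReal b * ENNReal.ofReal (Y ω) :=
    fun ω => by
      rw [ENNReal.ofReal_add (mul_nonneg ha (hX0 ω)) (mul_nonneg hb (hY0 ω)),
        ENNReal.ofReal_mul ha, ENNReal.ofReal_mul hb]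
  simp_rw [hsplit]
  rw [lintegral_add_left (hX.ennreal_ofReal.const_mul _),
    lintegral_const_mul' _ _ ENNReal.ofReal_ne_top,
    lintegral_const_mul' _ _ ENNReal.ofReal_ne_top]

end Expectation

section Summability

open Real

theorem summable_pnat_rpow {r : ℝ} (hr : r < -1) : Summable fun k : ℕ+ => (k : ℝ) ^ r :=
  (summable_nat_rpow.mpr hr).comp_injective PNat.coe_injective

theorem summable_rpow_of_const_mul_le {f : ℕ+ → ℝ} {c r : ℝ} (hc : 0 < c) (hr : r < -1)
    (hf : ∀ k : ℕ+, c * k ≤ f k) : Summable fun k => f k ^ r := by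
  refine ((summable_pnat_rpow hr).mul_left (c ^ r)).of_nonneg_of_le
    (fun k => rpow_nonneg ((by positivity : (0 : ℝ) ≤ c * k).trans (hf k)) _) fun k => ?_
  rw [← mul_rpow hc.le (by positivity)]
  exact rpow_le_rpow_of_nonpos (by positivity) (hf k) (by linarith)

theorem summable_rpow_of_mul_le {g : ℕ+ × ℕ+ → ℝ} {r : ℝ} (hr : r < -1)
    (hg : ∀ p : ℕ+ × ℕ+, (p.1 : ℝ) * p.2 ≤ g p) : Summable fun p => g p ^ r := by
  refine ((summable_pnat_rpow hr).mul_of_nonneg (summable_pnat_rpow hr) (fun _ => by positivity)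
    (fun _ => by positivity)).of_nonneg_of_le
    (fun p => rpow_nonneg ((by positivity : (0 : ℝ) ≤ p.1 * p.2).trans (hg p)) _) fun p => ?_
  rw [← mul_rpow (by positivity) (by positivity)]
  exact rpow_le_rpow_of_nonpos (by positivity) (hg p) (by linarith)

theorem three_quarters_pi_mul_le {k x : ℝ} (hk : 1 ≤ k) (hx : 0 < x)
    (h : (k - 1 / 4) ^ 2 * π ^ 2 < x ^ 2) : 3 / 4 * π * k ≤ x := by
  have hlt : (k - 1 / 4) * π < x := lt_of_pow_lt_pow_left₀ 2 hx.le (by rwa [mul_pow])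
  nlinarith [pi_pos]

theorem mul_le_sq_of_sq_add_sq_lt {n k x : ℝ} (hn : 0 ≤ n) (hk : 1 ≤ k)
    (h : n ^ 2 + (k - 1 / 4) ^ 2 * π ^ 2 < x ^ 2) : n * k ≤ x ^ 2 := by
  have hamgm : 2 * n * ((k - 1 / 4) * π) ≤ n ^ 2 + (k - 1 / 4) ^ 2 * π ^ 2 := by
    nlinarith [sq_nonneg (n - (k - 1 / 4) * π)]
  have hk_le : k ≤ 2 * ((k - 1 / 4) * π) := by nlinarith [pi_gt_three]
  nlinarith [mul_le_mul_of_nonneg_left hk_le hn]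

theorem summable_rpow_of_sub_quarter_mul_pi_lt {j0 : ℕ+ → ℝ} (hj0pos : ∀ k, 0 < j0 k)
    (hj0lb : ∀ k : ℕ+, ((k : ℝ) - 1 / 4) ^ 2 * π ^ 2 < j0 k ^ 2) {r : ℝ} (hr : r < -1) :
    Summable fun k => j0 k ^ r :=
  summable_rpow_of_const_mul_le (by positivity) hr fun k =>
    three_quarters_pi_mul_le (Nat.one_le_cast.mpr k.pos) (hj0pos k) (hj0lb k)

theorem summable_rpow_of_sq_add_sub_quarter_mul_pi_lt {j : ℕ+ × ℕ+ → ℝ}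
    (hjpos : ∀ p, 0 < j p)
    (hjlb : ∀ p : ℕ+ × ℕ+, (p.1 : ℝ) ^ 2 + ((p.2 : ℝ) - 1 / 4) ^ 2 * π ^ 2 < j p ^ 2)
    {r : ℝ} (hr : r < -2) : Summable fun p => j p ^ r := by
  have hsq := summable_rpow_of_mul_le (g := fun p => j p ^ 2) (r := r / 2) (by linarith)
    fun p => mul_le_sq_of_sq_add_sq_lt (by positivity) (Nat.one_le_cast.mpr p.2.pos) (hjlb p)
  refine hsq.congr fun p => ?_
  rw [← rpow_natCast_mul (hjpos p).le]
  ring_nf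

end Summability

theorem expected_sobolev_norm_field_general {Ω : Type*} [MeasureSpace Ω]
    (j0 : ℕ+ → ℝ) (j : ℕ+ × ℕ+ → ℝ)
    (hj0pos : ∀ k, 0 < j0 k) (hjpos : ∀ p, 0 < j p)
    (hj0lb : ∀ k : ℕ+, ((k : ℝ) - 1 / 4) ^ 2 * Real.pi ^ 2 < (j0 k) ^ 2)
    (hjlb : ∀ p : ℕ+ × ℕ+,
      ((p.1 : ℝ)) ^ 2 + ((p.2 : ℝ) - 1 / 4) ^ 2 * Real.pi ^ 2 < (j p) ^ 2)
    (A : ℕ+ → Ω → ℝ) (Z : ℕ+ × ℕ+ → Ω → ℂ) (W : ℕ+ → Ω → ℂ)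
    (hAmeas : ∀ k, Measurable (A k)) (hZmeas : ∀ p, Measurable (Z p))
    (hWmeas : ∀ n, Measurable (W n))
    (hA : ∀ k, ∫ ω, (A k ω) ^ 2 = 1)
    (hZW : ∀ p : ℕ+ × ℕ+,
      ∫ ω, ‖Z p ω + W p.1 ω / Real.sqrt ((p.1 : ℕ) : ℝ)‖ ^ 2 = 1 + 1 / ((p.1 : ℕ) : ℝ))
    (s : ℝ) (hs : 0 < s) :
    (∫⁻ ω, ENNReal.ofReal
        (Real.pi * ∑' k : ℕ+, (A k ω) ^ 2 * (j0 k) ^ (-2 - 2 * s) +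
          2 * Real.pi * ∑' p : ℕ+ × ℕ+,
            ‖Z p ω + W p.1 ω / Real.sqrt ((p.1 : ℕ) : ℝ)‖ ^ 2 * (j p) ^ (-2 - 2 * s))
      = ENNReal.ofReal
        (Real.pi * ∑' k : ℕ+, (j0 k) ^ (-2 - 2 * s) +
          2 * Real.pi * ∑' p : ℕ+ × ℕ+, (1 + 1 / ((p.1 : ℕ) : ℝ)) * (j p) ^ (-2 - 2 * s))) ∧
    Summable (fun k : ℕ+ => (j0 k) ^ (-2 - 2 * s)) ∧
    Summable (fun p : ℕ+ × ℕ+ => (1 + 1 / ((p.1 : ℕ) : ℝ)) * (j p) ^ (-2 - 2 * s)) := by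
  have hc0 : ∀ k, 0 ≤ j0 k ^ (-2 - 2 * s) := fun k => Real.rpow_nonneg (hj0pos k).le _
  have hc : ∀ p, 0 ≤ j p ^ (-2 - 2 * s) := fun p => Real.rpow_nonneg (hjpos p).le _
  have hweight : ∀ n : ℕ+, 1 + 1 / ((n : ℕ) : ℝ) ≤ 2 := fun n => by
    have : 1 / ((n : ℕ) : ℝ) ≤ 1 := div_le_one_of_le₀ (Nat.one_le_cast.mpr n.pos) (by positivity)
    linarith
  have hsum0 : Summable fun k : ℕ+ => j0 k ^ (-2 - 2 * s) :=
    summable_rpow_of_sub_quarter_mul_pi_lt hj0pos hj0lb (by linarith)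
  have hsum : Summable fun p : ℕ+ × ℕ+ => (1 + 1 / ((p.1 : ℕ) : ℝ)) * j p ^ (-2 - 2 * s) :=
    ((summable_rpow_of_sq_add_sub_quarter_mul_pi_lt hjpos hjlb (by linarith)).mul_left 2)
      |>.of_nonneg_of_le (fun p => mul_nonneg (by positivity) (hc p))
        fun p => mul_le_mul_of_nonneg_right (hweight p.1) (hc p)
  refine ⟨?_, hsum0, hsum⟩
  rw [lintegral_ofReal_mul_add_mul Real.pi_pos.le (by positivity)
      (Measurable.tsum fun k => by fun_prop)
      (fun ω => tsum_nonneg fun k => mul_nonneg (sq_nonneg _) (hc0 k))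
      (fun ω => tsum_nonneg fun p => mul_nonneg (sq_nonneg _) (hc p)),
    lintegral_ofReal_tsum_mul (fun k => by fun_prop) (fun _ _ => sq_nonneg _)
      (fun k => .of_integral_ne_zero (by simp [hA])) hA hc0 (by simpa only [one_mul] using hsum0),
    lintegral_ofReal_tsum_mul (fun p => by fun_prop) (fun _ _ => sq_nonneg _)
      (fun p => .of_integral_ne_zero (by rw [hZW]; positivity)) hZW hc hsum]
  simp only [one_mul]
  rw [← ENNReal.ofReal_mul Real.pi_pos.le, ← ENNReal.ofReal_mul (by positivity),
    ← ENNReal.ofReal_add (mul_nonneg Real.pi_pos.le (tsum_nonneg hc0))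
      (mul_nonneg (by positivity) (tsum_nonneg fun p => mul_nonneg (by positivity) (hc p)))]

/-- The expected squared `H^{−s}` norm of the field
`h = √π Σ_k (A_k/j_{0,k}) e_{0,k} + 2√π Re Σ_{n,k} (1/j_{n,k})(Z_{n,k} + W_n/√n) e_{n,k}`:
`E(‖h‖_{−s}²) = π Σ_k j_{0,k}^{−2−2s} + 2π Σ_{n,k} (1 + 1/n) j_{n,k}^{−2−2s} < ∞` for `s > 0`. -/
theorem expected_sobolev_norm_field {Ω : Type*} [MeasureSpace Ω]
    [IsProbabilityMeasure (volume : Measure Ω)]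
    (j0 : ℕ+ → ℝ) (j : ℕ+ × ℕ+ → ℝ)
    (hj0pos : ∀ k, 0 < j0 k) (hjpos : ∀ p, 0 < j p)
    (hj0lb : ∀ k : ℕ+, ((k : ℝ) - 1 / 4) ^ 2 * Real.pi ^ 2 < (j0 k) ^ 2)
    (hjlb : ∀ p : ℕ+ × ℕ+,
      ((p.1 : ℝ)) ^ 2 + ((p.2 : ℝ) - 1 / 4) ^ 2 * Real.pi ^ 2 < (j p) ^ 2)
    (A : ℕ+ → Ω → ℝ) (Z : ℕ+ × ℕ+ → Ω → ℂ) (W : ℕ+ → Ω → ℂ)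
    (hAmeas : ∀ k, Measurable (A k)) (hZmeas : ∀ p, Measurable (Z p))
    (hWmeas : ∀ n, Measurable (W n))
    (hA : ∀ k, ∫ ω, (A k ω) ^ 2 = 1)
    (hZW : ∀ p : ℕ+ × ℕ+,
      ∫ ω, ‖Z p ω + W p.1 ω / Real.sqrt ((p.1 : ℕ) : ℝ)‖ ^ 2 = 1 + 1 / ((p.1 : ℕ) : ℝ))
    (s : ℝ) (hs : 0 < s) :
    (∫⁻ ω, ENNReal.ofReal
        (Real.pi * ∑' k : ℕ+, (A k ω) ^ 2 * (j0 k) ^ (-2 - 2 * s) +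
          2 * Real.pi * ∑' p : ℕ+ × ℕ+,
            ‖Z p ω + W p.1 ω / Real.sqrt ((p.1 : ℕ) : ℝ)‖ ^ 2 * (j p) ^ (-2 - 2 * s))
      = ENNReal.ofReal
        (Real.pi * ∑' k : ℕ+, (j0 k) ^ (-2 - 2 * s) +
          2 * Real.pi * ∑' p : ℕ+ × ℕ+, (1 + 1 / ((p.1 : ℕ) : ℝ)) * (j p) ^ (-2 - 2 * s))) ∧
    Summable (fun k : ℕ+ => (j0 k) ^ (-2 - 2 * s)) ∧
    Summable (fun p : ℕ+ × ℕ+ => (1 + 1 / ((p.1 : ℕ) : ℝ)) * (j p) ^ (-2 - 2 * s)) :=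
  expected_sobolev_norm_field_general j0 j hj0pos hjpos hj0lb hjlb A Z W hAmeas hZmeas hWmeas hA hZW
    s hs
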